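/- arXiv:2106.13979 — 2 statements merged into one kernel-verified Lean document; each statement's English description precedes it below -/
import Mathlib

section
/- If Δ is a reflexive polytope in ℝⁿ (with the origin as its unique interior lattice point), then the Fine interior F(Δ) equals {0}. -/
noncomputable section

def pairing {n : ℕ} (x : Fin n → ℝ) (ν : Fin n → ℤ) : ℝ := ∑ i, x i * (ν i : ℝ)

def IsLatticePoint {n : ℕ} (x : Fin n → ℝ) : Prop := ∀ i, ∃ z : ℤ, x i = (z : ℝ)

/-- `ord_Δ(ν) := min_{m ∈ Δ ∩ M} ⟨m, ν⟩`. -/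
def ordL {n : ℕ} (Δ : Set (Fin n → ℝ)) (ν : Fin n → ℤ) : ℝ :=
  sInf ((fun m => pairing m ν) '' {m ∈ Δ | IsLatticePoint m})

/-- The Fine interior `F(Δ)`. -/
def FineInterior {n : ℕ} (Δ : Set (Fin n → ℝ)) : Set (Fin n → ℝ) :=
  { x | ∀ ν : Fin n → ℤ, ν ≠ 0 → ordL Δ ν + 1 ≤ pairing x ν }

/-!
For `w ≠ 0`, the interior point `0` yields a point of `Δ` where `⟨·, w⟩` is negative, so some
lattice vertex `v` has `⟨v, w⟩ < 0`, hence `⟨v, w⟩ ≤ -1` and `ord_Δ(w) ≤ -1`: this puts `0` in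
`F(Δ)`. Conversely, the facet description gives `ord_Δ(ν_i) ≥ -1`, so every `x ∈ F(Δ)` has
`⟨x, ν_i⟩ ≥ 0` for all `i`; the whole ray `ℝ≥0 • x` then lies in the bounded set `Δ`, forcing
`x = 0`.
-/

section

variable {n : ℕ}

def pairingLinear (w : Fin n → ℤ) : (Fin n → ℝ) →ₗ[ℝ] ℝ where
  toFun x := pairing x w
  map_add' x y := by simp only [pairing, Pi.add_apply, add_mul, Finset.sum_add_distrib]
  map_smul' c x := by simp only [pairing, Pi.smul_apply, smul_eq_mul, Finset.mul_sum, mul_assoc,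
    RingHom.id_apply]

@[simp]
lemma pairing_zero_left (w : Fin n → ℤ) : pairing 0 w = 0 := map_zero (pairingLinear w)

@[simp]
lemma pairing_zero_right (x : Fin n → ℝ) : pairing x 0 = 0 := by simp [pairing]

lemma pairing_smul (t : ℝ) (x : Fin n → ℝ) (w : Fin n → ℤ) : pairing (t • x) w = t * pairing x w :=
  map_smul (pairingLinear w) t x

lemma pairing_intCast_self_pos {w : Fin n → ℤ} (hw : w ≠ 0) :
    0 < pairing (fun i => (w i : ℝ)) w := by
  obtain ⟨i, hi⟩ := Function.ne_iff.mp hw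
  exact Finset.sum_pos' (fun j _ => mul_self_nonneg _)
    ⟨i, Finset.mem_univ i, mul_self_pos.mpr (Int.cast_ne_zero.mpr hi)⟩

lemma IsLatticePoint.exists_pairing_eq_intCast {x : Fin n → ℝ} (hx : IsLatticePoint x)
    (w : Fin n → ℤ) : ∃ z : ℤ, pairing x w = z := by
  choose z hz using hx
  exact ⟨∑ i, z i * w i, by simp [pairing, hz]⟩

lemma ordL_le_pairing {Δ : Set (Fin n → ℝ)} {w : Fin n → ℤ}
    (hbdd : BddBelow ((fun m => pairing m w) '' Δ)) {m : Fin n → ℝ} (hm : m ∈ Δ)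
    (hlat : IsLatticePoint m) : ordL Δ w ≤ pairing m w :=
  csInf_le (hbdd.mono (Set.image_mono fun _ h => h.1)) ⟨m, ⟨hm, hlat⟩, rfl⟩

lemma le_ordL_of_forall_le {Δ : Set (Fin n → ℝ)} {w : Fin n → ℤ} {c : ℝ}
    (hne : ∃ m ∈ Δ, IsLatticePoint m) (h : ∀ m ∈ Δ, c ≤ pairing m w) : c ≤ ordL Δ w := by
  obtain ⟨m, hm, hlat⟩ := hne
  exact le_csInf ⟨_, m, ⟨hm, hlat⟩, rfl⟩ (by rintro _ ⟨m, ⟨hm, -⟩, rfl⟩; exact h m hm)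

lemma exists_pairing_neg_of_zero_mem_interior {Δ : Set (Fin n → ℝ)}
    (h0 : (0 : Fin n → ℝ) ∈ interior Δ) {w : Fin n → ℤ} (hw : w ≠ 0) :
    ∃ m ∈ Δ, pairing m w < 0 := by
  set u : Fin n → ℝ := fun i => (w i : ℝ)
  have hsmul : Filter.Tendsto (fun t : ℝ => t • u) (nhdsWithin 0 (Set.Iio 0)) (nhds 0) :=
    ((continuous_id.smul continuous_const).tendsto' 0 0 (zero_smul ℝ u)).mono_left
      nhdsWithin_le_nhds
  obtain ⟨t, htΔ, ht⟩ := ((hsmul.eventually (mem_interior_iff_mem_nhds.mp h0)).and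
    self_mem_nhdsWithin).exists
  exact ⟨t • u, htΔ, by
    rw [pairing_smul]; exact mul_neg_of_neg_of_pos ht (pairing_intCast_self_pos hw)⟩

lemma isLatticePoint_zero : IsLatticePoint (0 : Fin n → ℝ) := fun _ => ⟨0, by simp⟩

lemma ordL_convexHull_le_neg_one {V : Finset (Fin n → ℝ)} (hV : ∀ v ∈ V, IsLatticePoint v)
    (h0 : (0 : Fin n → ℝ) ∈ interior (convexHull ℝ (V : Set (Fin n → ℝ))))
    {w : Fin n → ℤ} (hw : w ≠ 0) : ordL (convexHull ℝ (V : Set (Fin n → ℝ))) w ≤ -1 := by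
  obtain ⟨m, hm, hm_neg⟩ := exists_pairing_neg_of_zero_mem_interior h0 hw
  obtain ⟨v, hvV, hvm⟩ := ((pairingLinear w).concaveOn
    (convex_convexHull ℝ _)).exists_le_of_mem_convexHull (subset_convexHull ℝ _) hm
  obtain ⟨z, hz⟩ := (hV v hvV).exists_pairing_eq_intCast w
  have hz_neg : z < 0 := by
    have : pairing v w < 0 := lt_of_le_of_lt hvm hm_neg
    exact_mod_cast hz ▸ this
  have hbdd : BddBelow ((fun m => pairing m w) '' convexHull ℝ (V : Set (Fin n → ℝ))) :=
    (V.finite_toSet.isCompact_convexHull (𝕜 := ℝ)).bddBelow_image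
      (pairingLinear w).continuous_of_finiteDimensional.continuousOn
  calc ordL _ w ≤ pairing v w := ordL_le_pairing hbdd (subset_convexHull ℝ _ hvV) (hV v hvV)
    _ = z := hz
    _ ≤ -1 := by exact_mod_cast Int.le_sub_one_of_lt hz_neg

lemma zero_mem_fineInterior_convexHull {V : Finset (Fin n → ℝ)}
    (hV : ∀ v ∈ V, IsLatticePoint v)
    (h0 : (0 : Fin n → ℝ) ∈ interior (convexHull ℝ (V : Set (Fin n → ℝ)))) :
    (0 : Fin n → ℝ) ∈ FineInterior (convexHull ℝ (V : Set (Fin n → ℝ))) := by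
  intro w hw
  rw [pairing_zero_left]
  linarith [ordL_convexHull_le_neg_one hV h0 hw]

lemma eq_zero_of_isBounded_of_forall_smul_mem {E : Type*} [NormedAddCommGroup E]
    [NormedSpace ℝ E] {s : Set E} (hs : Bornology.IsBounded s) {x : E}
    (hx : ∀ t : ℝ, 0 ≤ t → t • x ∈ s) : x = 0 := by
  obtain ⟨C, hC⟩ := isBounded_iff_forall_norm_le.mp hs
  by_contra hx0
  have hpos : 0 < ‖x‖ := norm_pos_iff.mpr hx0
  have h := hC _ (hx ((|C| + 1) / ‖x‖) (by positivity))
  rw [norm_smul, Real.norm_of_nonneg (by positivity), div_mul_cancel₀ _ hpos.ne'] at h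
  linarith [le_abs_self C]

variable {s : ℕ} {ν : Fin s → (Fin n → ℤ)} {Δ : Set (Fin n → ℝ)}

lemma neg_one_le_ordL (hΔ : Δ = {x | ∀ i, (-1 : ℝ) ≤ pairing x (ν i)}) (i : Fin s) :
    -1 ≤ ordL Δ (ν i) := by
  subst hΔ
  exact le_ordL_of_forall_le ⟨0, fun _ => by simp, isLatticePoint_zero⟩ fun m hm => hm i

lemma pairing_nonneg_of_mem_fineInterior (hΔ : Δ = {x | ∀ i, (-1 : ℝ) ≤ pairing x (ν i)})
    {x : Fin n → ℝ} (hx : x ∈ FineInterior Δ) (i : Fin s) : 0 ≤ pairing x (ν i) := by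
  by_cases hνi : ν i = 0
  · simp [hνi]
  · linarith [hx (ν i) hνi, neg_one_le_ordL hΔ i]

lemma eq_zero_of_mem_fineInterior (hbdd : Bornology.IsBounded Δ)
    (hΔ : Δ = {x | ∀ i, (-1 : ℝ) ≤ pairing x (ν i)}) {x : Fin n → ℝ} (hx : x ∈ FineInterior Δ) :
    x = 0 := by
  refine eq_zero_of_isBounded_of_forall_smul_mem hbdd fun t ht => ?_
  rw [hΔ]
  intro i
  rw [pairing_smul]
  nlinarith [pairing_nonneg_of_mem_fineInterior hΔ hx i]

end

theorem fineInterior_of_reflexive_general {n s : ℕ}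
    (ν : Fin s → (Fin n → ℤ))
    (V : Finset (Fin n → ℝ)) (hV : ∀ v ∈ V, IsLatticePoint v)
    (Δ : Set (Fin n → ℝ))
    (hΔpoly : Δ = convexHull ℝ (V : Set (Fin n → ℝ)))
    (hΔineq : Δ = { x | ∀ i, (-1 : ℝ) ≤ pairing x (ν i) })
    (h0int : (0 : Fin n → ℝ) ∈ interior Δ) :
    FineInterior Δ = {0} := by
  subst hΔpoly
  have hbdd : Bornology.IsBounded (convexHull ℝ (V : Set (Fin n → ℝ))) :=
    (V.finite_toSet.isCompact_convexHull (𝕜 := ℝ)).isBounded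
  refine Set.Subset.antisymm (fun x hx => eq_zero_of_mem_fineInterior hbdd hΔineq hx) ?_
  rintro _ rfl
  exact zero_mem_fineInterior_convexHull hV h0int

/-- If `Δ` is a reflexive polytope in `ℝⁿ` (with the origin as its unique
interior lattice point), then the Fine interior `F(Δ)` equals `{0}`. -/
theorem fineInterior_of_reflexive {n s : ℕ}
    (ν : Fin s → (Fin n → ℤ))
    (V : Finset (Fin n → ℝ)) (hV : ∀ v ∈ V, IsLatticePoint v)
    (Δ : Set (Fin n → ℝ))
    (hΔpoly : Δ = convexHull ℝ (V : Set (Fin n → ℝ)))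
    (hΔineq : Δ = { x | ∀ i, (-1 : ℝ) ≤ pairing x (ν i) })
    (h0int : (0 : Fin n → ℝ) ∈ interior Δ)
    (huniq : ∀ m : Fin n → ℝ, IsLatticePoint m → m ∈ interior Δ → m = 0) :
    FineInterior Δ = {0} :=
  fineInterior_of_reflexive_general ν V hV Δ hΔpoly hΔineq h0int
end
end

section
/- Let Δ = conv{(2,1,5), (−2,−1,−3), (2,0,1), (2,2,1)} ⊂ ℝ³ (the polytope of class c). Then the Fine interior of Δ equals conv{(0,0,0), (1,1/2,2), (1,1/4,1), (1,3/4,1)}. -/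
/-
The vertices of `Δc` are lattice points, so `ord_Δc(ν)` is the minimum of `⟨v, ν⟩` over the four
vertices `v`. For `ν = (-1,0,0), (-1,0,1), (4,-4,-1), (0,4,-1)` this minimum is `-2, -1, -1, -1`,
and the resulting four inequalities cut out exactly the claimed simplex. Conversely the Fine
interior is convex, and each vertex `w` of the simplex has `4w` integral, so the Fine-interior
condition at `w` becomes a linear inequality system over `ℤ³`, settled by a bounded search.
-/

noncomputable section

/-- The polytope of class c): `Δ = conv{(2,1,5), (−2,−1,−3), (2,0,1), (2,2,1)} ⊂ ℝ³`. -/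
def Δc : Set (Fin 3 → ℝ) :=
  convexHull ℝ {![2, 1, 5], ![-2, -1, -3], ![2, 0, 1], ![2, 2, 1]}

open Matrix

section General

variable {n : ℕ}

theorem isLinearMap_pairing (ν : Fin n → ℤ) : IsLinearMap ℝ (pairing · ν) where
  map_add x y := by simp only [pairing, Pi.add_apply, add_mul, Finset.sum_add_distrib]
  map_smul c x := by simp only [pairing, Pi.smul_apply, smul_eq_mul, mul_assoc, Finset.mul_sum]

theorem le_pairing_of_mem_convexHull {s : Set (Fin n → ℝ)} {ν : Fin n → ℤ} {r : ℝ}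
    (hs : ∀ v ∈ s, r ≤ pairing v ν) {x : Fin n → ℝ} (hx : x ∈ convexHull ℝ s) :
    r ≤ pairing x ν :=
  convexHull_min hs (convex_halfSpace_ge (isLinearMap_pairing ν) r) hx

theorem convex_fineInterior (Δ : Set (Fin n → ℝ)) : Convex ℝ (FineInterior Δ) := by
  simp only [FineInterior, Set.ofPred_forall]
  exact convex_iInter fun ν ↦ convex_iInter fun _ ↦
    convex_halfSpace_ge (isLinearMap_pairing ν) _

def toRealVec (v : Fin n → ℤ) : Fin n → ℝ := fun i ↦ v i

theorem isLatticePoint_toRealVec (v : Fin n → ℤ) : IsLatticePoint (toRealVec v) :=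
  fun i ↦ ⟨v i, rfl⟩

theorem pairing_toRealVec (v ν : Fin n → ℤ) : pairing (toRealVec v) ν = ((v ⬝ᵥ ν : ℤ) : ℝ) := by
  simp [pairing, toRealVec, dotProduct]

theorem pairing_inv_smul_toRealVec (k : ℝ) (p ν : Fin n → ℤ) :
    pairing (k⁻¹ • toRealVec p) ν = ((p ⬝ᵥ ν : ℤ) : ℝ) / k := by
  rw [(isLinearMap_pairing ν).map_smul, pairing_toRealVec, smul_eq_mul, inv_mul_eq_div]

theorem ordL_convexHull_toRealVec (V : Finset (Fin n → ℤ)) (hV : V.Nonempty) (ν : Fin n → ℤ) :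
    ordL (convexHull ℝ (toRealVec '' V)) ν = (V.inf' hV (· ⬝ᵥ ν) : ℤ) := by
  set m := V.inf' hV (· ⬝ᵥ ν)
  have bound : (m : ℝ) ∈
      lowerBounds ((pairing · ν) '' {x ∈ convexHull ℝ (toRealVec '' V) | IsLatticePoint x}) := by
    refine Set.forall_mem_image.2 fun x hx ↦ le_pairing_of_mem_convexHull ?_ hx.1
    rintro _ ⟨v, hv, rfl⟩
    rw [pairing_toRealVec]
    exact_mod_cast V.inf'_le _ hv
  obtain ⟨v, hv, hmin⟩ : ∃ v ∈ V, m = v ⬝ᵥ ν := V.exists_mem_eq_inf' hV _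
  have hv_mem : toRealVec v ∈ {x ∈ convexHull ℝ (toRealVec '' V) | IsLatticePoint x} :=
    ⟨subset_convexHull ℝ _ ⟨v, hv, rfl⟩, isLatticePoint_toRealVec v⟩
  refine le_antisymm (csInf_le ⟨_, bound⟩ ⟨_, hv_mem, ?_⟩) (le_csInf ⟨_, _, hv_mem, rfl⟩ bound)
  simp only [pairing_toRealVec, hmin]

theorem inv_smul_toRealVec_mem_fineInterior_iff (V : Finset (Fin n → ℤ)) (hV : V.Nonempty)
    (p : Fin n → ℤ) {k : ℕ} (hk : 0 < k) :
    ((k : ℝ)⁻¹ • toRealVec p) ∈ FineInterior (convexHull ℝ (toRealVec '' V)) ↔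
      ∀ ν ≠ 0, ∃ v ∈ V, k * (v ⬝ᵥ ν + 1) ≤ p ⬝ᵥ ν := by
  refine forall₂_congr fun ν _ ↦ ?_
  rw [ordL_convexHull_toRealVec V hV, pairing_inv_smul_toRealVec, le_div_iff₀ (by positivity)]
  norm_cast
  constructor
  · obtain ⟨v, hv, hmin⟩ := V.exists_mem_eq_inf' hV (· ⬝ᵥ ν)
    exact fun h ↦ ⟨v, hv, by rw [← hmin, mul_comm]; exact h⟩
  · rintro ⟨v, hv, h⟩
    calc (V.inf' hV (· ⬝ᵥ ν) + 1) * k ≤ (v ⬝ᵥ ν + 1) * k := by gcongr; exact V.inf'_le _ hv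
      _ ≤ p ⬝ᵥ ν := by rwa [mul_comm]

end General

def Δc_vertices : Finset (Fin 3 → ℤ) := {![2, 1, 5], ![-2, -1, -3], ![2, 0, 1], ![2, 2, 1]}

theorem Δc_eq_convexHull_vertices : Δc = convexHull ℝ (toRealVec '' Δc_vertices) := by
  rw [Δc, Δc_vertices]
  push_cast
  simp only [Set.image_insert_eq, Set.image_singleton]
  congr! <;> ext i <;> fin_cases i <;> simp [toRealVec]

theorem Δc_vertices_nonempty : Δc_vertices.Nonempty := Finset.insert_nonempty _ _

theorem ordL_Δc (ν : Fin 3 → ℤ) : ordL Δc ν = Δc_vertices.inf' Δc_vertices_nonempty (· ⬝ᵥ ν) := by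
  rw [Δc_eq_convexHull_vertices, ordL_convexHull_toRealVec]

theorem facet_inequalities_of_mem_fineInterior_Δc {x : Fin 3 → ℝ} (hx : x ∈ FineInterior Δc) :
    x 0 ≤ 1 ∧ x 0 ≤ x 2 ∧ 4 * x 1 + x 2 ≤ 4 * x 0 ∧ x 2 ≤ 4 * x 1 := by
  have facet (ν : Fin 3 → ℤ) (hν : ν ≠ 0) :
      ((Δc_vertices.inf' Δc_vertices_nonempty (· ⬝ᵥ ν) : ℤ) : ℝ) + 1 ≤
        x 0 * ν 0 + x 1 * ν 1 + x 2 * ν 2 := by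
    simpa [ordL_Δc, pairing, Fin.sum_univ_three] using hx ν hν
  have h₁ := facet ![-1, 0, 0] (by decide)
  have h₂ := facet ![-1, 0, 1] (by decide)
  have h₃ := facet ![4, -4, -1] (by decide)
  have h₄ := facet ![0, 4, -1] (by decide)
  simp [Δc_vertices, dotProduct, Fin.sum_univ_three] at h₁ h₂ h₃ h₄
  refine ⟨?_, ?_, ?_, ?_⟩ <;> linarith

theorem mem_convexHull_of_facet_inequalities {x : Fin 3 → ℝ} (h₁ : x 0 ≤ 1) (h₂ : x 0 ≤ x 2)
    (h₃ : 4 * x 1 + x 2 ≤ 4 * x 0) (h₄ : x 2 ≤ 4 * x 1) :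
    x ∈ convexHull ℝ {![0, 0, 0], ![1, 1/2, 2], ![1, 1/4, 1], ![1, 3/4, 1]} := by
  let z : Fin 4 → Fin 3 → ℝ := ![![0, 0, 0], ![1, 1/2, 2], ![1, 1/4, 1], ![1, 3/4, 1]]
  -- `t i` is the slack of `x` in the facet inequality opposite `z i`, scaled to be `1` at `z i`
  let t : Fin 4 → ℝ := ![1 - x 0, x 2 - x 0, 2 * x 0 - 2 * x 1 - x 2 / 2, 2 * x 1 - x 2 / 2]
  have hx : x = ∑ i, t i • z i := by
    ext j; fin_cases j <;> simp [Fin.sum_univ_four, t, z] <;> ring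
  rw [hx]
  refine (convex_convexHull ℝ _).sum_mem (fun i _ ↦ ?_) ?_ (fun i _ ↦ subset_convexHull ℝ _ ?_)
  · fin_cases i <;> simp [t] <;> linarith
  · simp [Fin.sum_univ_four, t]; ring
  · fin_cases i <;> simp [z]

def fineInteriorΔc_vertices_mul_four : Finset (Fin 3 → ℤ) :=
  {![0, 0, 0], ![4, 2, 8], ![4, 1, 4], ![4, 3, 4]}

theorem fineInteriorΔc_vertices_eq_image :
    ({![0, 0, 0], ![1, 1/2, 2], ![1, 1/4, 1], ![1, 3/4, 1]} : Set (Fin 3 → ℝ)) =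
      (fun p ↦ ((4 : ℕ) : ℝ)⁻¹ • toRealVec p) '' fineInteriorΔc_vertices_mul_four := by
  rw [fineInteriorΔc_vertices_mul_four]
  push_cast
  simp only [Set.image_insert_eq, Set.image_singleton]
  congr! <;> ext i <;> fin_cases i <;> norm_num [toRealVec]

theorem exists_vertex_four_mul_le {p : Fin 3 → ℤ} (hp : p ∈ fineInteriorΔc_vertices_mul_four)
    {ν : Fin 3 → ℤ} (hν : ν ≠ 0) : ∃ v ∈ Δc_vertices, 4 * (v ⬝ᵥ ν + 1) ≤ p ⬝ᵥ ν := by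
  obtain ⟨a, b, c, rfl⟩ : ∃ a b c : ℤ, ν = ![a, b, c] :=
    ⟨ν 0, ν 1, ν 2, by ext i; fin_cases i <;> rfl⟩
  replace hν : ¬(a = 0 ∧ b = 0 ∧ c = 0) := by
    rintro ⟨rfl, rfl, rfl⟩; exact hν (by ext i; fin_cases i <;> rfl)
  simp only [fineInteriorΔc_vertices_mul_four, Finset.mem_insert, Finset.mem_singleton] at hp
  simp only [Δc_vertices, Finset.mem_insert, Finset.mem_singleton, exists_eq_or_imp,
    exists_eq_left]
  by_contra! H
  -- a bounded search: `c = 0`, `|b| ≤ 3`, and then one linear problem in `a` per value of `b`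
  rcases hp with rfl | rfl | rfl | rfl <;> simp [dotProduct, Fin.sum_univ_three] at H <;>
  · obtain rfl : c = 0 := by omega
    obtain ⟨hb₁, hb₂⟩ : -3 ≤ b ∧ b ≤ 3 := by omega
    interval_cases b <;> omega

/-- The Fine interior of the class c) polytope equals
`conv{(0,0,0), (1,1/2,2), (1,1/4,1), (1,3/4,1)}`. -/
theorem fineInterior_classC :
    FineInterior Δc =
      convexHull ℝ {![0, 0, 0], ![1, 1/2, 2], ![1, 1/4, 1], ![1, 3/4, 1]} := by
  refine Set.Subset.antisymm (fun x hx ↦ ?_) (convexHull_min ?_ (convex_fineInterior Δc))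
  · obtain ⟨h₁, h₂, h₃, h₄⟩ := facet_inequalities_of_mem_fineInterior_Δc hx
    exact mem_convexHull_of_facet_inequalities h₁ h₂ h₃ h₄
  · rw [fineInteriorΔc_vertices_eq_image, Set.image_subset_iff]
    intro p hp
    rw [Set.mem_preimage, Δc_eq_convexHull_vertices,
      inv_smul_toRealVec_mem_fineInterior_iff _ Δc_vertices_nonempty _ four_pos]
    exact fun ν hν ↦ exists_vertex_four_mul_le hp hν
end
end
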